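/- arXiv:2405.08579 — 2 statements merged into one kernel-verified Lean document; each statement's English description precedes it below -/
import Mathlib

section
/- Fix c ∈ ℂ. With N = 1, d = 3, variables u_ℓ, and F = u_0(u_0 + c)(u_2 u_1 − u_{−1} u_{−2}) (the modified Narita–Itoh–Bogoyavlensky equation), the matrices M = [[0, 1, 0], [0, 0, 1], [−u_0 u_1 (u_2 + c), 0, λ]] and U = [[u_{−1}(c(u_{−2} + u_0) + u_0 u_{−2} + u_0 u_1), 0, λ], [−λ u_0 u_1 (u_2 + c), u_0(c(u_{−1} + u_1) + u_1 u_{−1} + u_1 u_2), λ²], [−λ² u_0 u_1 (u_2 + c), −λ u_1 u_2 (u_3 + c), c(u_0 u_1 + u_1 u_2) + u_0 u_1 u_2 + u_1 u_2 u_3 + λ³]] satisfy det(M) ≠ 0 and D_t(M) = S(U)·M − M·U, i.e. (M, U) is a matrix Lax representation for the modified Narita–Itoh–Bogoyavlensky equation. -/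
/-!
Setup: `K1` is the field of rational functions over `ℂ` in the commuting
variables `λ` (here `lam`) and `u_ℓ` (`ℓ : ℤ`), realized as the fraction field
of the multivariate polynomial ring.  `S1` is the shift automorphism `S`
(fixing `ℂ` and `λ`, sending `u_ℓ` to `u_{ℓ+1}`), and `Sz ℓ = S^ℓ`.
-/

set_option maxHeartbeats 1000000
set_option synthInstance.maxHeartbeats 1000000

noncomputable section

open MvPolynomial

abbrev R1 : Type := MvPolynomial (Option ℤ) ℂ
abbrev K1 : Type := FractionRing R1

def lam : K1 := algebraMap R1 K1 (X none)
def u (ℓ : ℤ) : K1 := algebraMap R1 K1 (X (some ℓ))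

def shiftR1 : R1 ≃+* R1 :=
  (renameEquiv ℂ (Equiv.optionCongr (Equiv.addRight (1:ℤ)))).toRingEquiv

/-- The shift automorphism `S` of the field `K1`. -/
def S1 : RingAut K1 := IsFractionRing.ringEquivOfRingEquiv shiftR1

/-- `Sz ℓ = S^ℓ`. -/
def Sz (ℓ : ℤ) : K1 ≃+* K1 := S1 ^ ℓ


lemma S1_alg (x : R1) : S1 (algebraMap R1 K1 x) = algebraMap R1 K1 (shiftR1 x) :=
  IsFractionRing.ringEquivOfRingEquiv_algebraMap _ _

lemma shiftR1_X (k : ℤ) : shiftR1 (X (some k)) = X (some (k+1)) := by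
  simp [shiftR1, Equiv.optionCongr]

lemma shiftR1_Xnone : shiftR1 (X none) = X none := by
  simp [shiftR1, Equiv.optionCongr]

lemma S1u (k : ℤ) : S1 (u k) = u (k+1) := by
  rw [u, S1_alg, shiftR1_X]; rfl

lemma S1lam : S1 lam = lam := by rw [lam, S1_alg, shiftR1_Xnone]

lemma algC (c : ℂ) : (algebraMap ℂ K1) c = algebraMap R1 K1 (C c) := by
  simp [IsScalarTower.algebraMap_apply ℂ R1 K1]

lemma S1c (c : ℂ) : S1 (algebraMap ℂ K1 c) = algebraMap ℂ K1 c := by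
  rw [algC, S1_alg]
  congr 1
  simp [shiftR1]

lemma Sz0 (x : K1) : Sz 0 x = x := by rw [Sz, zpow_zero]; rfl
lemma Sz1 (x : K1) : Sz 1 x = S1 x := by simp [Sz]
lemma Sz2 (x : K1) : Sz 2 x = S1 (S1 x) := by
  have h : (S1 ^ (2:ℤ)) = S1 * S1 := by
    rw [show (2:ℤ) = 1 + 1 from rfl, zpow_add, zpow_one]
  rw [Sz, h]; rfl

lemma u_ne (k : ℤ) : u k ≠ 0 := by
  rw [u, map_ne_zero_iff _ (IsFractionRing.injective R1 K1)]
  exact X_ne_zero _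

lemma u2c_ne (c : ℂ) (k : ℤ) : u k + algebraMap ℂ K1 c ≠ 0 := by
  rw [u, algC, ← map_add, map_ne_zero_iff _ (IsFractionRing.injective R1 K1)]
  intro h
  have := congrArg (eval fun i => if i = some k then 1 - c else 0) h
  simp at this

/-- the pair `(M, U)` below is a matrix Lax representation for
the modified Narita–Itoh–Bogoyavlensky equation
`∂ₜ(u) = u_0(u_0 + c)(u_2 u_1 − u_{−1} u_{−2})`. -/
theorem statement12 (c : ℂ)
    -- the total derivative `D_t` for `F = u_0(u_0 + c)(u_2 u_1 − u_{−1} u_{−2})`: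
    (Dt : Derivation ℂ K1 K1) (hDtlam : Dt lam = 0)
    (hDtu : ∀ ℓ : ℤ,
      Dt (u ℓ) = Sz ℓ (u 0 * (u 0 + algebraMap ℂ K1 c) * (u 2 * u 1 - u (-1) * u (-2)))) :
    (!![0, 1, 0; 0, 0, 1; -(u 0 * u 1 * (u 2 + algebraMap ℂ K1 c)), 0, lam] :
        Matrix (Fin 3) (Fin 3) K1).det ≠ 0 ∧
    (!![0, 1, 0; 0, 0, 1; -(u 0 * u 1 * (u 2 + algebraMap ℂ K1 c)), 0, lam] :
        Matrix (Fin 3) (Fin 3) K1).map ⇑Dt =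
      (!![u (-1) * (algebraMap ℂ K1 c * (u (-2) + u 0) + u 0 * u (-2) + u 0 * u 1), 0, lam;
          -(lam * u 0 * u 1 * (u 2 + algebraMap ℂ K1 c)),
            u 0 * (algebraMap ℂ K1 c * (u (-1) + u 1) + u 1 * u (-1) + u 1 * u 2), lam^2;
          -(lam^2 * u 0 * u 1 * (u 2 + algebraMap ℂ K1 c)),
            -(lam * u 1 * u 2 * (u 3 + algebraMap ℂ K1 c)),
            algebraMap ℂ K1 c * (u 0 * u 1 + u 1 * u 2) + u 0 * u 1 * u 2 + u 1 * u 2 * u 3 +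
              lam^3] : Matrix (Fin 3) (Fin 3) K1).map ⇑(Sz 1) *
        !![0, 1, 0; 0, 0, 1; -(u 0 * u 1 * (u 2 + algebraMap ℂ K1 c)), 0, lam] -
      !![0, 1, 0; 0, 0, 1; -(u 0 * u 1 * (u 2 + algebraMap ℂ K1 c)), 0, lam] *
        !![u (-1) * (algebraMap ℂ K1 c * (u (-2) + u 0) + u 0 * u (-2) + u 0 * u 1), 0, lam;
           -(lam * u 0 * u 1 * (u 2 + algebraMap ℂ K1 c)),
             u 0 * (algebraMap ℂ K1 c * (u (-1) + u 1) + u 1 * u (-1) + u 1 * u 2), lam^2;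
           -(lam^2 * u 0 * u 1 * (u 2 + algebraMap ℂ K1 c)),
             -(lam * u 1 * u 2 * (u 3 + algebraMap ℂ K1 c)),
             algebraMap ℂ K1 c * (u 0 * u 1 + u 1 * u 2) + u 0 * u 1 * u 2 + u 1 * u 2 * u 3 +
               lam^3] := by
  constructor
  · have hne : u 0 * u 1 * (u 2 + algebraMap ℂ K1 c) ≠ 0 :=
      mul_ne_zero (mul_ne_zero (u_ne 0) (u_ne 1)) (u2c_ne c 2)
    rw [Matrix.det_fin_three]
    simp [Matrix.vecHead, Matrix.vecTail]
    exact ⟨⟨u_ne 0, u_ne 1⟩, u2c_ne c 2⟩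
  · have hc : Dt (algebraMap ℂ K1 c) = 0 := Derivation.map_algebraMap Dt c
    ext i j
    fin_cases i <;> fin_cases j <;>
      simp [Matrix.mul_apply, Fin.sum_univ_succ, Matrix.map_apply, Matrix.vecHead,
        Matrix.vecTail, Derivation.leibniz,
        hDtu, hDtlam, hc, Sz0, Sz1, Sz2, map_mul, map_add, map_sub, S1u, S1lam, S1c,
        smul_eq_mul] <;> ring
end
end

section
/- Fix c ∈ ℂ. Let M = M(u_0,u_1,u_2,λ) = [[0, 1, 0], [0, 0, 1], [−u_0 u_1 (u_2 + c), 0, λ]] and, taking a_0 = 1, let M(a_0,u_0,u_1,λ) = [[0, 1, 0], [0, 0, 1], [−u_0(u_1 + c), 0, λ]]. Then M satisfies both conditions: (i) ∂/∂u_0 ( ∂M/∂u_2 · M^{-1} ) = 0, and (ii) ∂/∂u_0 ( ∂M/∂u_1 · M^{-1} + M · (∂/∂u_1 (M(a_0,u_0,u_1,λ)) · M(a_0,u_0,u_1,λ)^{-1}) · M^{-1} ) = 0. -/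
/-!
Setup: `K1` is the field of rational functions over `ℂ` in the commuting
variables `λ` (here `lam`) and `u_ℓ` (`ℓ : ℤ`), realized as the fraction field
of the multivariate polynomial ring.  `S1` is the shift automorphism `S`
(fixing `ℂ` and `λ`, sending `u_ℓ` to `u_{ℓ+1}`), and `Sz ℓ = S^ℓ`.
-/

set_option maxHeartbeats 1000000

noncomputable section

open MvPolynomial

/-!
Both matrices have the companion shape `C(p) = [[0,1,0],[0,0,1],[-p,0,λ]]`. For a derivation
`D` killing `λ`, the logarithmic derivative `D C(p) · C(p)⁻¹` is `(D p / p) • E` with `E`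
constant, and conjugating `y • E` by `C(p)` gives `y • E'` with `E'` constant and independent
of `p`. Hence the two expressions are `(u₂ + c)⁻¹ • E` and `u₁⁻¹ • E + (u₁ + c)⁻¹ • E'`, whose
coefficients do not involve `u₀`.
-/

open Matrix

section Companion

variable {F : Type*} [Field F]

def companionLogDerivMatrix (l : F) : Matrix (Fin 3) (Fin 3) F :=
  !![0, 0, 0; 0, 0, 0; 0, -l, 1]

def companionConjLogDerivMatrix (l : F) : Matrix (Fin 3) (Fin 3) F :=
  !![0, 0, 0; -l, 1, 0; -l ^ 2, l, 0]

theorem inv_companion (l : F) {p : F} (hp : p ≠ 0) :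
    (!![0, 1, 0; 0, 0, 1; -p, 0, l] : Matrix (Fin 3) (Fin 3) F)⁻¹ =
      !![0, l / p, -1 / p; 1, 0, 0; 0, 1, 0] := by
  refine inv_eq_right_inv ?_
  ext i j
  fin_cases i <;> fin_cases j <;> simp [mul_apply, Fin.sum_univ_three, mul_div_cancel₀ _ hp]

theorem companion_mul_smul_mul_inv (l y : F) {p : F} (hp : p ≠ 0) :
    !![0, 1, 0; 0, 0, 1; -p, 0, l] * (y • companionLogDerivMatrix l) *
        (!![0, 1, 0; 0, 0, 1; -p, 0, l] : Matrix (Fin 3) (Fin 3) F)⁻¹ =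
      y • companionConjLogDerivMatrix l := by
  rw [inv_companion l hp]
  ext i j
  fin_cases i <;> fin_cases j <;>
    simp [companionLogDerivMatrix, companionConjLogDerivMatrix, mul_apply, Fin.sum_univ_three] <;>
    ring

end Companion

namespace Derivation

variable {R A : Type*} [CommRing R] [CommRing A] [Algebra R A] (D : Derivation R A A)

theorem add_algebraMap_ne_zero [Nontrivial A] {x : A} (hx : D x = 1) (c : R) :
    x + algebraMap R A c ≠ 0 := by
  intro h
  simpa [hx] using congrArg D h

theorem matrix_map_smul_of_map_eq_zero {m n : Type*} (x : A) {M : Matrix m n A}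
    (hM : M.map D = 0) : (x • M).map D = D x • M := by
  ext i j
  have hMij : D (M i j) = 0 := congrFun (congrFun hM i) j
  simp [leibniz, hMij, mul_comm]

end Derivation

section CompanionDerivation

variable {R F : Type*} [CommRing R] [Field F] [Algebra R F] (D : Derivation R F F) {l : F}

theorem map_companion (hl : D l = 0) (p : F) :
    (!![0, 1, 0; 0, 0, 1; -p, 0, l] : Matrix (Fin 3) (Fin 3) F).map D =
      !![0, 0, 0; 0, 0, 0; -D p, 0, 0] := by
  ext i j
  fin_cases i <;> fin_cases j <;> simp [hl]

theorem map_companion_mul_inv (hl : D l = 0) {p : F} (hp : p ≠ 0) :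
    (!![0, 1, 0; 0, 0, 1; -p, 0, l] : Matrix (Fin 3) (Fin 3) F).map D *
        (!![0, 1, 0; 0, 0, 1; -p, 0, l] : Matrix (Fin 3) (Fin 3) F)⁻¹ =
      (D p / p) • companionLogDerivMatrix l := by
  rw [map_companion D hl, inv_companion l hp]
  ext i j
  fin_cases i <;> fin_cases j <;>
    simp [companionLogDerivMatrix, mul_apply, Fin.sum_univ_three] <;> ring

theorem map_companionLogDerivMatrix (hl : D l = 0) : (companionLogDerivMatrix l).map D = 0 := by
  ext i j
  fin_cases i <;> fin_cases j <;> simp [companionLogDerivMatrix, hl]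

theorem map_companionConjLogDerivMatrix (hl : D l = 0) :
    (companionConjLogDerivMatrix l).map D = 0 := by
  ext i j
  fin_cases i <;> fin_cases j <;> simp [companionConjLogDerivMatrix, hl, Derivation.leibniz_pow]

end CompanionDerivation

/-- with `M = M(u_0,u_1,u_2,λ)` below and (taking `a_0 = 1`)
`M(a_0,u_0,u_1,λ) = [[0,1,0],[0,0,1],[−u_0(u_1+c),0,λ]]`, the matrix `M`
satisfies conditions (i) and (ii) of Theorem `thmuknew`. -/
theorem statement13 (c : ℂ)
    -- the partial derivatives `∂/∂u_ℓ`: ℂ-derivations with `∂u_m/∂u_ℓ = δ_{mℓ}`, `∂λ/∂u_ℓ = 0`: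
    (Pd : ℤ → Derivation ℂ K1 K1)
    (hPdlam : ∀ ℓ, Pd ℓ lam = 0)
    (hPdu : ∀ ℓ m : ℤ, Pd ℓ (u m) = if m = ℓ then 1 else 0) :
    -- condition (i): `∂/∂u_0 ( ∂M/∂u_2 · M⁻¹ ) = 0`
    ((!![0, 1, 0; 0, 0, 1; -(u 0 * u 1 * (u 2 + algebraMap ℂ K1 c)), 0, lam] :
        Matrix (Fin 3) (Fin 3) K1).map ⇑(Pd 2) *
      (!![0, 1, 0; 0, 0, 1; -(u 0 * u 1 * (u 2 + algebraMap ℂ K1 c)), 0, lam] :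
        Matrix (Fin 3) (Fin 3) K1)⁻¹).map ⇑(Pd 0) = 0 ∧
    -- condition (ii):
    ((!![0, 1, 0; 0, 0, 1; -(u 0 * u 1 * (u 2 + algebraMap ℂ K1 c)), 0, lam] :
        Matrix (Fin 3) (Fin 3) K1).map ⇑(Pd 1) *
      (!![0, 1, 0; 0, 0, 1; -(u 0 * u 1 * (u 2 + algebraMap ℂ K1 c)), 0, lam] :
        Matrix (Fin 3) (Fin 3) K1)⁻¹ +
      !![0, 1, 0; 0, 0, 1; -(u 0 * u 1 * (u 2 + algebraMap ℂ K1 c)), 0, lam] *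
        ((!![0, 1, 0; 0, 0, 1; -(u 0 * (u 1 + algebraMap ℂ K1 c)), 0, lam] :
            Matrix (Fin 3) (Fin 3) K1).map ⇑(Pd 1) *
          (!![0, 1, 0; 0, 0, 1; -(u 0 * (u 1 + algebraMap ℂ K1 c)), 0, lam] :
            Matrix (Fin 3) (Fin 3) K1)⁻¹) *
        (!![0, 1, 0; 0, 0, 1; -(u 0 * u 1 * (u 2 + algebraMap ℂ K1 c)), 0, lam] :
          Matrix (Fin 3) (Fin 3) K1)⁻¹).map ⇑(Pd 0) = 0 := by
  have hu : ∀ ℓ, Pd ℓ (u ℓ) = 1 := fun ℓ => by simp [hPdu]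
  have hu_of_ne : ∀ {ℓ m : ℤ}, m ≠ ℓ → Pd ℓ (u m) = 0 := fun h => by simp [hPdu, h]
  have hu_add_ne : ∀ ℓ, u ℓ + algebraMap ℂ K1 c ≠ 0 := fun ℓ =>
    (Pd ℓ).add_algebraMap_ne_zero (hu ℓ) c
  have hu_ne : ∀ ℓ, u ℓ ≠ 0 := fun ℓ => by
    simpa using (Pd ℓ).add_algebraMap_ne_zero (hu ℓ) 0
  have hp : u 0 * u 1 * (u 2 + algebraMap ℂ K1 c) ≠ 0 := by simp [hu_ne, hu_add_ne]
  have hq : u 0 * (u 1 + algebraMap ℂ K1 c) ≠ 0 := by simp [hu_ne, hu_add_ne]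
  have h2p : Pd 2 (u 0 * u 1 * (u 2 + algebraMap ℂ K1 c)) /
      (u 0 * u 1 * (u 2 + algebraMap ℂ K1 c)) = (u 2 + algebraMap ℂ K1 c)⁻¹ := by
    simp [Derivation.leibniz, hu, hu_of_ne]
    field_simp [hu_ne 0, hu_ne 1]
  have h1p : Pd 1 (u 0 * u 1 * (u 2 + algebraMap ℂ K1 c)) /
      (u 0 * u 1 * (u 2 + algebraMap ℂ K1 c)) = (u 1)⁻¹ := by
    simp [Derivation.leibniz, hu, hu_of_ne]
    field_simp [hu_ne 0, hu_add_ne 2]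
  have h1q : Pd 1 (u 0 * (u 1 + algebraMap ℂ K1 c)) / (u 0 * (u 1 + algebraMap ℂ K1 c)) =
      (u 1 + algebraMap ℂ K1 c)⁻¹ := by
    simp [Derivation.leibniz, hu, hu_of_ne]
    field_simp [hu_ne 0]
  rw [map_companion_mul_inv _ (hPdlam 2) hp, map_companion_mul_inv _ (hPdlam 1) hp,
    map_companion_mul_inv _ (hPdlam 1) hq, companion_mul_smul_mul_inv _ _ hp, h2p, h1p, h1q,
    Matrix.map_add _ (map_add _),
    (Pd 0).matrix_map_smul_of_map_eq_zero _ (map_companionLogDerivMatrix _ (hPdlam 0)),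
    (Pd 0).matrix_map_smul_of_map_eq_zero _ (map_companionLogDerivMatrix _ (hPdlam 0)),
    (Pd 0).matrix_map_smul_of_map_eq_zero _ (map_companionConjLogDerivMatrix _ (hPdlam 0))]
  simp [Derivation.leibniz_inv, hu_of_ne]
end
end
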